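/- For every k \ge 1, the k-th iterate of \tilde{B} is given by \tilde{B}^k(y) = 3^k y / 2^{\mu(k)} for y \in [1/2, 2^{\mu(k)}/3^k) and \tilde{B}^k(y) = 3^k y / 2^{\mu(k)+1} for y \in [2^{\mu(k)}/3^k, 1), where \mu(k) = \lfloor k \log 3 / \log 2 \rfloor. -/
import Mathlib


noncomputable def Btilde (y : ℝ) : ℝ := if y < 2 / 3 then 3 * y / 2 else 3 * y / 4

noncomputable def mu (k : ℕ) : ℕ := ⌊(k : ℝ) * Real.log 3 / Real.log 2⌋₊

lemma two_pow_mu_le (k : ℕ) : (2:ℝ) ^ (mu k) ≤ 3 ^ k := by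
  have hlog2 : (0:ℝ) < Real.log 2 := Real.log_pos (by norm_num)
  have h : (mu k : ℝ) ≤ (k : ℝ) * Real.log 3 / Real.log 2 :=
    Nat.floor_le (by positivity)
  have h' : (mu k : ℝ) * Real.log 2 ≤ (k : ℝ) * Real.log 3 :=
    (le_div_iff₀ hlog2).mp h
  have := Real.exp_le_exp.mpr h'
  rwa [← Real.log_pow, ← Real.log_pow, Real.exp_log (by positivity),
    Real.exp_log (by positivity)] at this

lemma three_pow_lt (k : ℕ) : (3:ℝ) ^ k < 2 ^ (mu k + 1) := by
  have hlog2 : (0:ℝ) < Real.log 2 := Real.log_pos (by norm_num)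
  have h : (k : ℝ) * Real.log 3 / Real.log 2 < (mu k : ℝ) + 1 :=
    Nat.lt_floor_add_one _
  have h' : (k : ℝ) * Real.log 3 < ((mu k : ℝ) + 1) * Real.log 2 :=
    (div_lt_iff₀ hlog2).mp h
  have := Real.exp_lt_exp.mpr h'
  rwa [← Real.log_pow, show ((mu k : ℝ) + 1) = ((mu k + 1 : ℕ) : ℝ) by push_cast; ring,
    ← Real.log_pow, Real.exp_log (by positivity), Real.exp_log (by positivity)] at this

lemma mu_succ (k : ℕ) : mu (k + 1) = mu k + 1 ∨ mu (k + 1) = mu k + 2 := by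
  have h1 := two_pow_mu_le k
  have h2 := three_pow_lt k
  have h3 := two_pow_mu_le (k + 1)
  have h4 := three_pow_lt (k + 1)
  have hub : (2:ℝ) ^ (mu (k+1)) < 2 ^ (mu k + 3) := by
    calc (2:ℝ) ^ (mu (k+1)) ≤ 3 ^ (k+1) := h3
    _ = 3 * 3 ^ k := by ring
    _ < 3 * 2 ^ (mu k + 1) := by linarith
    _ < 4 * 2 ^ (mu k + 1) := by nlinarith [pow_pos (by norm_num : (0:ℝ) < 2) (mu k + 1)]
    _ = 2 ^ (mu k + 3) := by ring
  have hlb : (2:ℝ) ^ (mu k + 1) < 2 ^ (mu (k+1) + 1) := by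
    calc (2:ℝ) ^ (mu k + 1) = 2 * 2 ^ (mu k) := by ring
    _ < 3 * 2 ^ (mu k) := by nlinarith [pow_pos (by norm_num : (0:ℝ) < 2) (mu k)]
    _ ≤ 3 * 3 ^ k := by linarith
    _ = 3 ^ (k + 1) := by ring
    _ < 2 ^ (mu (k+1) + 1) := h4
  have hub' : mu (k+1) < mu k + 3 := by
    exact_mod_cast (pow_lt_pow_iff_right₀ (by norm_num : (1:ℝ) < 2)).mp hub
  have hlb' : mu k + 1 < mu (k+1) + 1 := by
    exact_mod_cast (pow_lt_pow_iff_right₀ (by norm_num : (1:ℝ) < 2)).mp hlb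
  omega

set_option maxHeartbeats 1000000 in
lemma key (k : ℕ) (y : ℝ) (hy : y ∈ Set.Ico (1 / 2 : ℝ) 1) :
    ((y < 2 ^ (mu k) / 3 ^ k → Btilde^[k] y = 3 ^ k * y / 2 ^ (mu k)) ∧
     (2 ^ (mu k) / 3 ^ k ≤ y → Btilde^[k] y = 3 ^ k * y / 2 ^ (mu k + 1))) ∧
    Btilde^[k] y ∈ Set.Ico (1 / 2 : ℝ) 1 := by
  obtain ⟨hy1, hy2⟩ := hy
  induction k with
  | zero =>
    have hmu0 : mu 0 = 0 := by simp [mu]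
    refine ⟨⟨fun _ => ?_, fun h => ?_⟩, hy1, hy2⟩
    · simp [hmu0]
    · exfalso; rw [hmu0] at h; simp at h; linarith
  | succ k ih =>
    obtain ⟨⟨hA, hB⟩, hm1, hm2⟩ := ih
    have p3 : (0:ℝ) < 3 ^ k := by positivity
    have p2 : (0:ℝ) < 2 ^ (mu k) := by positivity
    have h1 := two_pow_mu_le k
    have h2 := three_pow_lt k
    have h1' := two_pow_mu_le (k + 1)
    have h2' := three_pow_lt (k + 1)
    rw [Function.iterate_succ_apply']
    rcases mu_succ k with hμ | hμ <;> rw [hμ] at h1' h2' ⊢ <;> set m := mu k with hm <;>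
      simp only [pow_succ] at h1' h2' h2
    · -- mu (k+1) = m + 1 : 2^(m+1) ≤ 3^(k+1) < 2^(m+2)
      by_cases hc : y < 2 ^ m / 3 ^ k
      · rw [hA hc]
        rw [lt_div_iff₀ p3] at hc
        by_cases hd : y < 2 ^ (m + 1) / 3 ^ (k + 1)
        · rw [lt_div_iff₀ (by positivity : (0:ℝ) < 3 ^ (k+1))] at hd
          simp only [pow_succ] at hd
          have hz : 3 ^ k * y / 2 ^ m < 2 / 3 := by
            rw [div_lt_div_iff₀ p2 (by norm_num)]; nlinarith
          have hval : Btilde (3 ^ k * y / 2 ^ m) = 3 ^ (k + 1) * y / 2 ^ (m + 1) := by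
            rw [Btilde, if_pos hz, pow_succ, pow_succ]; ring
          rw [hval]
          refine ⟨⟨fun _ => rfl, fun h => absurd h (not_le.mpr ?_)⟩, ?_, ?_⟩
          · rw [lt_div_iff₀ (by positivity : (0:ℝ) < 3 ^ (k+1))]
            simp only [pow_succ]; nlinarith
          · rw [le_div_iff₀ (by positivity : (0:ℝ) < 2 ^ (m+1))]
            simp only [pow_succ]; nlinarith
          · rw [div_lt_one (by positivity : (0:ℝ) < 2 ^ (m+1))]
            simp only [pow_succ]; nlinarith
        · push_neg at hd
          rw [div_le_iff₀ (by positivity : (0:ℝ) < 3 ^ (k+1))] at hd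
          simp only [pow_succ] at hd
          have hz : ¬ (3 ^ k * y / 2 ^ m < 2 / 3) := by
            rw [not_lt, le_div_iff₀ p2]; nlinarith
          have hval : Btilde (3 ^ k * y / 2 ^ m) = 3 ^ (k + 1) * y / 2 ^ (m + 1 + 1) := by
            rw [Btilde, if_neg hz, pow_succ, pow_succ, pow_succ]; ring
          rw [hval]
          refine ⟨⟨fun h => absurd h (not_lt.mpr ?_), fun _ => rfl⟩, ?_, ?_⟩
          · rw [div_le_iff₀ (by positivity : (0:ℝ) < 3 ^ (k+1))]
            simp only [pow_succ]; nlinarith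
          · rw [le_div_iff₀ (by positivity : (0:ℝ) < 2 ^ (m+1+1))]
            simp only [pow_succ]; nlinarith
          · rw [div_lt_one (by positivity : (0:ℝ) < 2 ^ (m+1+1))]
            simp only [pow_succ]; nlinarith
      · push_neg at hc
        rw [hB hc]
        rw [div_le_iff₀ p3] at hc
        have hz : 3 ^ k * y / 2 ^ (m + 1) < 2 / 3 := by
          rw [div_lt_div_iff₀ (by positivity : (0:ℝ) < 2 ^ (m+1)) (by norm_num)]
          simp only [pow_succ]; nlinarith
        have hval : Btilde (3 ^ k * y / 2 ^ (m + 1)) = 3 ^ (k + 1) * y / 2 ^ (m + 1 + 1) := by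
          rw [Btilde, if_pos hz, pow_succ, pow_succ, pow_succ]; ring
        rw [hval]
        refine ⟨⟨fun h => absurd h (not_lt.mpr ?_), fun _ => rfl⟩, ?_, ?_⟩
        · rw [div_le_iff₀ (by positivity : (0:ℝ) < 3 ^ (k+1))]
          simp only [pow_succ]; nlinarith
        · rw [le_div_iff₀ (by positivity : (0:ℝ) < 2 ^ (m+1+1))]
          simp only [pow_succ]; nlinarith
        · rw [div_lt_one (by positivity : (0:ℝ) < 2 ^ (m+1+1))]
          simp only [pow_succ]; nlinarith
    · -- mu (k+1) = m + 2 : 2^(m+2) ≤ 3^(k+1) < 2^(m+3)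
      by_cases hc : y < 2 ^ m / 3 ^ k
      · rw [hA hc]
        rw [lt_div_iff₀ p3] at hc
        have hz : ¬ (3 ^ k * y / 2 ^ m < 2 / 3) := by
          rw [not_lt, le_div_iff₀ p2]; nlinarith
        have hval : Btilde (3 ^ k * y / 2 ^ m) = 3 ^ (k + 1) * y / 2 ^ (m + 2) := by
          rw [Btilde, if_neg hz, pow_succ, pow_succ, pow_succ]; ring
        rw [hval]
        refine ⟨⟨fun _ => rfl, fun h => absurd h (not_le.mpr ?_)⟩, ?_, ?_⟩
        · rw [lt_div_iff₀ (by positivity : (0:ℝ) < 3 ^ (k+1))]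
          simp only [pow_succ]; nlinarith
        · rw [le_div_iff₀ (by positivity : (0:ℝ) < 2 ^ (m+2))]
          simp only [pow_succ]; nlinarith
        · rw [div_lt_one (by positivity : (0:ℝ) < 2 ^ (m+2))]
          simp only [pow_succ]; nlinarith
      · push_neg at hc
        rw [hB hc]
        rw [div_le_iff₀ p3] at hc
        by_cases hd : y < 2 ^ (m + 2) / 3 ^ (k + 1)
        · rw [lt_div_iff₀ (by positivity : (0:ℝ) < 3 ^ (k+1))] at hd
          simp only [pow_succ] at hd
          have hz : 3 ^ k * y / 2 ^ (m + 1) < 2 / 3 := by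
            rw [div_lt_div_iff₀ (by positivity : (0:ℝ) < 2 ^ (m+1)) (by norm_num)]
            simp only [pow_succ]; nlinarith
          have hval : Btilde (3 ^ k * y / 2 ^ (m + 1)) = 3 ^ (k + 1) * y / 2 ^ (m + 2) := by
            rw [Btilde, if_pos hz, pow_succ, pow_succ, pow_succ, pow_succ]; ring
          rw [hval]
          refine ⟨⟨fun _ => rfl, fun h => absurd h (not_le.mpr ?_)⟩, ?_, ?_⟩
          · rw [lt_div_iff₀ (by positivity : (0:ℝ) < 3 ^ (k+1))]
            simp only [pow_succ]; nlinarith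
          · rw [le_div_iff₀ (by positivity : (0:ℝ) < 2 ^ (m+2))]
            simp only [pow_succ]; nlinarith
          · rw [div_lt_one (by positivity : (0:ℝ) < 2 ^ (m+2))]
            simp only [pow_succ]; nlinarith
        · push_neg at hd
          rw [div_le_iff₀ (by positivity : (0:ℝ) < 3 ^ (k+1))] at hd
          simp only [pow_succ] at hd
          have hz : ¬ (3 ^ k * y / 2 ^ (m + 1) < 2 / 3) := by
            rw [not_lt, le_div_iff₀ (by positivity : (0:ℝ) < 2 ^ (m+1))]
            simp only [pow_succ]; nlinarith
          have hval : Btilde (3 ^ k * y / 2 ^ (m + 1)) = 3 ^ (k + 1) * y / 2 ^ (m + 2 + 1) := by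
            rw [Btilde, if_neg hz, pow_succ, pow_succ, pow_succ, pow_succ, pow_succ]; ring
          rw [hval]
          refine ⟨⟨fun h => absurd h (not_lt.mpr ?_), fun _ => rfl⟩, ?_, ?_⟩
          · rw [div_le_iff₀ (by positivity : (0:ℝ) < 3 ^ (k+1))]
            simp only [pow_succ]; nlinarith
          · rw [le_div_iff₀ (by positivity : (0:ℝ) < 2 ^ (m+2+1))]
            simp only [pow_succ]; nlinarith
          · rw [div_lt_one (by positivity : (0:ℝ) < 2 ^ (m+2+1))]
            simp only [pow_succ]; nlinarith

theorem Btilde_iterate_formula (k : ℕ) (hk : 1 ≤ k) (y : ℝ)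
    (hy : y ∈ Set.Ico (1 / 2 : ℝ) 1) :
    (y < 2 ^ (mu k) / 3 ^ k → Btilde^[k] y = 3 ^ k * y / 2 ^ (mu k)) ∧
    (2 ^ (mu k) / 3 ^ k ≤ y → Btilde^[k] y = 3 ^ k * y / 2 ^ (mu k + 1)) := by
  exact (key k y hy).1
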